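/- With the Levi-Civita invariant polynomial on so(2n,2), the transgression between A = ω + e and Ā = ω (same spin connection) evaluates to the Lanczos–Lovelock form: Q_{ω+e←ω}^{(2n+1)} = ((n+1)/ℓ) ε_{a₁···a_{2n+1}} ∫₀¹ dt F_t^{a₁a₂}···F_t^{a_{2n-1}a_{2n}} e^{a_{2n+1}} (up to the normalization 2ⁿ factors), where F_t^{ab} = R^{ab} + (t²/ℓ²)e^a e^b, with no explicit torsion dependence. -/

import Mathlib

/-!
Since `θ = e^a P_a` has no `J`-component while `⟨…⟩` has a single `P`-slot, the only surviving
term of `⟨θ F_t ⋯ F_t⟩` puts `θ` in that slot, so only the `J`-components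
`R^{ab} + (t²/ℓ²) e^a e^b` of `F_t` enter and the torsion `t T^a P_a` drops out. The `t`-integral
then commutes with the finite `ε`-sum.
-/

open Finset

section LeviCivita

variable {S : Type*} {n : ℕ}

/-- The contraction `ε_{a₁⋯a_{2n+1}} J₁^{a₁a₂} ⋯ Jₙ^{a_{2n-1}a_{2n}} p^{a_{2n+1}}`. -/
def leviCivitaContraction [CommRing S] (J : Fin n → Fin (2 * n + 1) → Fin (2 * n + 1) → S)
    (p : Fin (2 * n + 1) → S) : S :=
  ∑ σ : Equiv.Perm (Fin (2 * n + 1)), (Equiv.Perm.sign σ : ℤ) •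
    ((∏ k : Fin n, J k (σ ⟨2 * (k : ℕ), by omega⟩) (σ ⟨2 * (k : ℕ) + 1, by omega⟩)) *
      p (σ ⟨2 * n, Nat.lt_succ_self _⟩))

theorem leviCivitaContraction_eq_zero_of_eq_zero [CommRing S]
    {J : Fin n → Fin (2 * n + 1) → Fin (2 * n + 1) → S} (p : Fin (2 * n + 1) → S)
    {k : Fin n} (hk : J k = 0) : leviCivitaContraction J p = 0 :=
  sum_eq_zero fun σ _ => by
    rw [prod_eq_zero (mem_univ k) (by rw [hk]; rfl), zero_mul, smul_zero]

/-- An entry with vanishing `J`-part must sit in the single `P`-slot; in any other slot it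
annihilates the `J`-product. -/
theorem sum_leviCivitaContraction_succAbove [CommRing S]
    (Z : Fin (n + 1) → (Fin (2 * n + 1) → Fin (2 * n + 1) → S) × (Fin (2 * n + 1) → S))
    (hZ : (Z 0).1 = 0) :
    ∑ i, leviCivitaContraction (fun k => (Z (i.succAbove k)).1) (Z i).2
      = leviCivitaContraction (fun k => (Z k.succ).1) (Z 0).2 := by
  rw [sum_eq_single 0 (fun i _ hi => ?_) (fun h => absurd (mem_univ 0) h)]
  · simp only [Fin.succAbove_zero]
  · obtain ⟨k, hk⟩ := Fin.exists_succAbove_eq (Ne.symm hi)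
    exact leviCivitaContraction_eq_zero_of_eq_zero _ (k := k) (by rw [hk, hZ])

theorem intervalIntegral_leviCivitaContraction [NormedCommRing S] [NormedAlgebra ℝ S]
    {J : ℝ → Fin n → Fin (2 * n + 1) → Fin (2 * n + 1) → S}
    (hJ : ∀ k a b, Continuous fun t => J t k a b) (p : Fin (2 * n + 1) → S) (a b : ℝ) :
    ∫ t in a..b, leviCivitaContraction (J t) p
      = ∑ σ : Equiv.Perm (Fin (2 * n + 1)), (Equiv.Perm.sign σ : ℤ) •
          ∫ t in a..b,
            (∏ k : Fin n, J t k (σ ⟨2 * (k : ℕ), by omega⟩) (σ ⟨2 * (k : ℕ) + 1, by omega⟩)) *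
              p (σ ⟨2 * n, Nat.lt_succ_self _⟩) := by
  have hint : ∀ σ : Equiv.Perm (Fin (2 * n + 1)), IntervalIntegrable
      (fun t => (∏ k : Fin n, J t k (σ ⟨2 * (k : ℕ), by omega⟩) (σ ⟨2 * (k : ℕ) + 1, by omega⟩)) *
        p (σ ⟨2 * n, Nat.lt_succ_self _⟩)) MeasureTheory.volume a b := fun σ =>
    ((continuous_finsetProd _ fun k _ => hJ k _ _).mul continuous_const).intervalIntegrable a b
  simp only [leviCivitaContraction, ← Int.cast_smul_eq_zsmul ℝ]
  refine (intervalIntegral.integral_finsetSum fun σ _ =>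
    (hint σ).smul ((Equiv.Perm.sign σ : ℤ) : ℝ)).trans ?_
  exact sum_congr rfl fun σ _ => intervalIntegral.integral_smul _ _

end LeviCivita

/-- With the Levi-Civita invariant polynomial on `so(2n,2)`
(`⟨J_{a₁a₂}⋯J_{a_{2n-1}a_{2n}}P_{a_{2n+1}}⟩ ∝ ε_{a₁⋯a_{2n+1}}/ℓ`, all other
combinations zero), the transgression between `A = ω + e` and `Ā = ω` (same spin
connection) evaluates to the Lanczos–Lovelock form
`Q_{ω+e←ω} = ((n+1)/ℓ) ε_{a₁⋯a_{2n+1}} ∫₀¹ dt F_t^{a₁a₂}⋯F_t^{a_{2n-1}a_{2n}} e^{a_{2n+1}}`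
(up to the `2ⁿ` normalization factors), where `F_t^{ab} = R^{ab} + (t²/ℓ²)e^a e^b`,
with no explicit torsion dependence.

Here `so(2n,2)`-valued forms are represented by their components:
an element of `V = (J-components, P-components)`; `ε` is realized by a signed sum
over permutations of the `2n+1` Lorentz indices. -/
theorem lanczos_lovelock_transgression
    (S : Type) [NormedCommRing S] [NormedAlgebra ℝ S]   -- scalar differential forms on M
    (n : ℕ) (ℓ : ℝ)
    -- vielbein and spin connection components
    (ec : Fin (2 * n + 1) → S)
    -- Lorentz curvature and torsion
    (R : Fin (2 * n + 1) → Fin (2 * n + 1) → S)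
    (T : Fin (2 * n + 1) → S)
    -- the curvature of A_t = ω + t e, in components:
    -- F_t = ½(R^{ab} + (t²/ℓ²)e^a e^b)J_{ab} + tT^a P_a
    (Ft : ℝ → (Fin (2 * n + 1) → Fin (2 * n + 1) → S) × (Fin (2 * n + 1) → S))
    (hFt : ∀ t, Ft t
      = (fun a b => R a b + ((t ^ 2) / (ℓ ^ 2)) • (ec a * ec b), fun a => t • T a))
    -- θ = A - Ā = e^a P_a
    (θ : (Fin (2 * n + 1) → Fin (2 * n + 1) → S) × (Fin (2 * n + 1) → S))
    (hθ : θ = (0, ec))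
    -- the Levi-Civita invariant polynomial, in components: it picks exactly one
    -- P-entry and contracts all J-entries with the ε-symbol
    (P : (Fin (n + 1) → (Fin (2 * n + 1) → Fin (2 * n + 1) → S) × (Fin (2 * n + 1) → S)) → S)
    (hP : ∀ Z, P Z = (1 / ℓ) •
      ∑ i : Fin (n + 1), ∑ σ : Equiv.Perm (Fin (2 * n + 1)),
        (Equiv.Perm.sign σ : ℤ) •
          ((∏ k : Fin n,
              (Z (i.succAbove k)).1
                (σ ⟨2 * (k : ℕ), by have := k.isLt; omega⟩)
                (σ ⟨2 * (k : ℕ) + 1, by have := k.isLt; omega⟩)) *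
            (Z i).2 (σ ⟨2 * n, by omega⟩)))
    -- the transgression form Q_{ω+e←ω} = (n+1)∫₀¹⟨θ F_t^n⟩dt
    (Q : S)
    (hQ : Q = (n + 1 : ℝ) • ∫ t in (0 : ℝ)..1, P (Fin.cons θ fun _ => Ft t)) :
    Q = ((n + 1 : ℝ) / ℓ) •
      ∑ σ : Equiv.Perm (Fin (2 * n + 1)),
        (Equiv.Perm.sign σ : ℤ) •
          ∫ t in (0 : ℝ)..1,
            (∏ k : Fin n,
              (R (σ ⟨2 * (k : ℕ), by have := k.isLt; omega⟩)
                 (σ ⟨2 * (k : ℕ) + 1, by have := k.isLt; omega⟩)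
               + ((t ^ 2) / (ℓ ^ 2)) •
                   (ec (σ ⟨2 * (k : ℕ), by have := k.isLt; omega⟩) *
                    ec (σ ⟨2 * (k : ℕ) + 1, by have := k.isLt; omega⟩)))) *
            ec (σ ⟨2 * n, by omega⟩) := by
  have hPt : ∀ t, P (Fin.cons θ fun _ => Ft t)
      = (1 / ℓ) • leviCivitaContraction (fun _ => (Ft t).1) ec := fun t => by
    rw [hP, hθ]
    exact congrArg _ (sum_leviCivitaContraction_succAbove _ rfl)
  have hJ : ∀ (k : Fin n) a b, Continuous fun t => (Ft t).1 a b := fun _ a b => by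
    simp only [hFt]
    fun_prop
  rw [hQ, funext hPt, intervalIntegral.integral_smul, smul_smul, mul_one_div,
    intervalIntegral_leviCivitaContraction hJ]
  simp only [hFt]
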